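/- Let R be a commutative ring in which 6 is invertible, and let v = (a,b,c,d) ∈ R⁴ be a binary cubic form over R with Δ₃(v) a unit of R. Then the R-linear map M₂(R) → R⁴ sending X to X·v (the Lie algebra action) is bijective. -/

import Mathlib

/-!
In the coordinates `(α, β, γ, δ)` of `X`, the map `X ↦ X·v` is given by a `4 × 4` matrix whose
determinant is exactly the discriminant of `v`; a square matrix over a commutative ring with unit
determinant acts bijectively.
-/

/-- The discriminant of the binary cubic form `a·x³ + b·x²y + c·xy² + d·y³`. -/
def disc3 {R : Type*} [CommRing R] (a b c d : R) : R :=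
  b ^ 2 * c ^ 2 - 4 * a * c ^ 3 - 4 * b ^ 3 * d - 27 * a ^ 2 * d ^ 2 + 18 * a * b * c * d

/-- The Lie algebra action of `M₂(R)` on binary cubic forms, in coordinates:
for `X = [[α,β],[γ,δ]]` and `f ↔ (a,b,c,d)`,
`X·(a,b,c,d) = ((2α−δ)a + βb, 3γa + αb + 2βc, 2γb + δc + 3βd, γc + (2δ−α)d)`. -/
def lieAct3 {R : Type*} [CommRing R] (X : Matrix (Fin 2) (Fin 2) R) (v : Fin 4 → R) :
    Fin 4 → R :=
  ![(2 * X 0 0 - X 1 1) * v 0 + X 0 1 * v 1,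
    3 * X 1 0 * v 0 + X 0 0 * v 1 + 2 * X 0 1 * v 2,
    2 * X 1 0 * v 1 + X 1 1 * v 2 + 3 * X 0 1 * v 3,
    X 1 0 * v 2 + (2 * X 1 1 - X 0 0) * v 3]

theorem Matrix.mulVec_bijective_of_isUnit_det {R n : Type*} [CommRing R] [Fintype n]
    [DecidableEq n] {A : Matrix n n R} (h : IsUnit A.det) : Function.Bijective A.mulVec :=
  have hA : IsUnit A := (A.isUnit_iff_isUnit_det).2 h
  ⟨mulVec_injective_of_isUnit hA, mulVec_surjective_iff_isUnit.2 hA⟩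

def matrixFinTwoEquiv {α : Type*} : Matrix (Fin 2) (Fin 2) α ≃ (Fin 4 → α) where
  toFun X := ![X 0 0, X 0 1, X 1 0, X 1 1]
  invFun w := !![w 0, w 1; w 2, w 3]
  left_inv X := by ext i j; fin_cases i <;> fin_cases j <;> rfl
  right_inv w := by ext i; fin_cases i <;> rfl

section LieAct3

variable {R : Type*} [CommRing R]

def lieAct3Matrix (v : Fin 4 → R) : Matrix (Fin 4) (Fin 4) R :=
  !![2 * v 0, v 1, 0, -v 0;
     v 1, 2 * v 2, 3 * v 0, 0;
     0, 3 * v 3, 2 * v 1, v 2;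
     -v 3, 0, v 2, 2 * v 3]

theorem lieAct3_eq_mulVec (X : Matrix (Fin 2) (Fin 2) R) (v : Fin 4 → R) :
    lieAct3 X v = (lieAct3Matrix v).mulVec (matrixFinTwoEquiv X) := by
  ext i
  fin_cases i <;>
    simp [lieAct3, lieAct3Matrix, matrixFinTwoEquiv, Matrix.mulVec, dotProduct,
      Fin.sum_univ_four] <;>
    ring

theorem det_lieAct3Matrix (v : Fin 4 → R) :
    (lieAct3Matrix v).det = disc3 (v 0) (v 1) (v 2) (v 3) := by
  rw [Matrix.det_succ_row_zero, Fin.sum_univ_four]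
  simp [lieAct3Matrix, Matrix.det_fin_three, Fin.succAbove, disc3]
  ring

end LieAct3

theorem lieAct3_bijective_of_isUnit_disc_general {R : Type*} [CommRing R]
    (v : Fin 4 → R)
    (hv : IsUnit (disc3 (v 0) (v 1) (v 2) (v 3))) :
    Function.Bijective (fun X : Matrix (Fin 2) (Fin 2) R => lieAct3 X v) := by
  have hfactor : (fun X => lieAct3 X v) = (lieAct3Matrix v).mulVec ∘ matrixFinTwoEquiv :=
    funext fun X => lieAct3_eq_mulVec X v
  rw [hfactor]
  rw [← det_lieAct3Matrix] at hv
  exact (Matrix.mulVec_bijective_of_isUnit_det hv).comp matrixFinTwoEquiv.bijective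

/-- If `6` is invertible in a commutative ring `R` and `v` is a binary cubic form over `R`
whose discriminant is a unit, then the Lie algebra action map `M₂(R) → R⁴`, `X ↦ X·v`,
is bijective. -/
theorem lieAct3_bijective_of_isUnit_disc {R : Type*} [CommRing R]
    (h6 : IsUnit (6 : R)) (v : Fin 4 → R)
    (hv : IsUnit (disc3 (v 0) (v 1) (v 2) (v 3))) :
    Function.Bijective (fun X : Matrix (Fin 2) (Fin 2) R => lieAct3 X v) :=
  lieAct3_bijective_of_isUnit_disc_general v hv
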